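/- For all integers R_A ≥ 2 and R_D ≥ 2, the Attacker-Defender game with endowments R_A and R_D has exactly one mixed-strategy Nash equilibrium (a*, d*), given by: a*_0 = (R_D−l*)/R_D, a*_i = (R_D−l*)/((R_D−i+1)(R_D−i)) for 1 ≤ i ≤ l*, a*_i = 0 for l* < i ≤ R_A; and d*_j = 1/(R_D−j) for 0 ≤ j < l*, d*_{l*} = 1 − Σ_{j=0}^{l*−1} 1/(R_D−j), d*_j = 0 for l* < j ≤ R_D; where l* = min(R_A, k*) and k* is the unique integer with 1 ≤ k* ≤ R_D−1 satisfying H_{R_D} − H_{R_D−k*} < 1 < H_{R_D} − H_{R_D−k*−1}. -/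

import Mathlib

/-- Attacker's payoff: `R_A - i + R_D - j` if `i > j`, else `R_A - i`. -/
noncomputable def piA (RA RD i j : ℕ) : ℝ :=
  if j < i then (RA : ℝ) - i + ((RD : ℝ) - j) else (RA : ℝ) - i

/-- Defender's payoff: `0` if `i > j`, else `R_D - j`. -/
noncomputable def piD (RD i j : ℕ) : ℝ :=
  if j < i then 0 else (RD : ℝ) - j

/-- A mixed strategy over the investments `{0, 1, ..., R}`. -/
def IsMixed (R : ℕ) (s : ℕ → ℝ) : Prop :=
  (∀ i, 0 ≤ s i) ∧ (∀ i, R < i → s i = 0) ∧ ∑ i ∈ Finset.range (R + 1), s i = 1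

/-- Attacker's expected payoff under mixed strategies. -/
noncomputable def PayA (RA RD : ℕ) (a d : ℕ → ℝ) : ℝ :=
  ∑ i ∈ Finset.range (RA + 1), ∑ j ∈ Finset.range (RD + 1), a i * d j * piA RA RD i j

/-- Defender's expected payoff under mixed strategies. -/
noncomputable def PayD (RA RD : ℕ) (a d : ℕ → ℝ) : ℝ :=
  ∑ i ∈ Finset.range (RA + 1), ∑ j ∈ Finset.range (RD + 1), a i * d j * piD RD i j

/-- Mixed-strategy Nash equilibrium of the A-D game with endowments `RA`, `RD`. -/
def IsNash (RA RD : ℕ) (a d : ℕ → ℝ) : Prop :=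
  IsMixed RA a ∧ IsMixed RD d ∧
  (∀ a', IsMixed RA a' → PayA RA RD a' d ≤ PayA RA RD a d) ∧
  (∀ d', IsMixed RD d' → PayD RA RD a d' ≤ PayD RA RD a d)

/-- The `n`-th harmonic number `H_n = 1 + 1/2 + ... + 1/n` (with `H_0 = 0`). -/
noncomputable def H (n : ℕ) : ℝ := ∑ k ∈ Finset.Icc 1 n, (1 : ℝ) / k

/-- `l` is the upper bound `l*` for endowment `R`:
the unique `1 ≤ l ≤ R - 1` with `H_R - H_{R-l} < 1 < H_R - H_{R-l-1}`. -/
def IsUpperBound (R l : ℕ) : Prop :=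
  1 ≤ l ∧ l ≤ R - 1 ∧ H R - H (R - l) < 1 ∧ 1 < H R - H (R - l - 1)

/-- Attacker's equilibrium mixed strategy (defender endowment `R`, upper bound `l`). -/
noncomputable def astar (R l : ℕ) : ℕ → ℝ := fun i =>
  if i = 0 then ((R : ℝ) - l) / R
  else if i ≤ l then ((R : ℝ) - l) / (((R : ℝ) - i + 1) * ((R : ℝ) - i))
  else 0

/-- Defender's equilibrium mixed strategy (defender endowment `R`, upper bound `l`). -/
noncomputable def dstar (R l : ℕ) : ℕ → ℝ := fun j =>
  if j < l then 1 / ((R : ℝ) - j)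
  else if j = l then 1 - ∑ k ∈ Finset.range l, 1 / ((R : ℝ) - k)
  else 0

/-!
Against a mixed defence `d`, investing `i` earns the attacker `RA - i + C i` with
`C i = ∑_{j<i} d j (RD - j)`; against a mixed attack `a`, defending with `j` earns the defender
`(RD - j) A j` with `A` the distribution function of `a`. In equilibrium the defender's value is
positive and her support is an interval `[0, L]`. Indifference on it gives `A j ∝ 1 / (RD - j)`,
so the attacker's support contains `[0, L]`, and indifference there gives `C i = i`, i.e.
`d j = 1 / (RD - j)` for `j < L`. The remaining mass `1 - ∑_{j<L} 1/(RD - j)` on `L` must be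
nonnegative, investing `L + 1` must not pay, and the attacker must afford `L`; together these
force `L = min RA k*`.
-/

open Finset

theorem sum_range_eq_of_eq_zero {M : Type*} [AddCommMonoid M] {f : ℕ → M} {m n : ℕ}
    (hf : ∀ j, min m n ≤ j → j < max m n → f j = 0) :
    ∑ j ∈ range m, f j = ∑ j ∈ range n, f j := by
  wlog hmn : m ≤ n generalizing m n
  · exact (this (by rwa [min_comm, max_comm]) (by omega)).symm
  refine sum_subset (range_subset_range.2 hmn) fun j hjn hjm => hf j ?_ ?_ <;>
    simp only [mem_range, not_lt] at hjn hjm <;> omega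

theorem sum_range_ite_lt {M : Type*} [AddCommMonoid M] {f : ℕ → M} {N m : ℕ}
    (hf : ∀ j, N < j → f j = 0) :
    ∑ j ∈ range (N + 1), (if j < m then f j else 0) = ∑ j ∈ range m, f j := by
  rw [sum_range_eq_of_eq_zero (n := m) fun j hj _ => ?_]
  · exact sum_congr rfl fun j hj => if_pos (mem_range.1 hj)
  · split_ifs with h
    · exact hf j (by omega)
    · rfl

section Mixed

variable {R : ℕ} {s : ℕ → ℝ}

theorem IsMixed.le_of_ne_zero (hs : IsMixed R s) {i : ℕ} (hi : s i ≠ 0) : i ≤ R :=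
  not_lt.1 fun h => hi (hs.2.1 i h)

theorem IsMixed.sum_range_eq_one (hs : IsMixed R s) {L : ℕ} (hL : ∀ i, L < i → s i = 0) :
    ∑ i ∈ range (L + 1), s i = 1 := by
  rw [← hs.2.2]
  exact sum_range_eq_of_eq_zero fun i hi _ => by
    rcases le_or_gt i R with h | h
    · exact hL i (by omega)
    · exact hs.2.1 i h

theorem IsMixed.sum_range_le_one (hs : IsMixed R s) (m : ℕ) :
    ∑ i ∈ range m, s i ≤ 1 :=
  calc ∑ i ∈ range m, s i
      ≤ ∑ i ∈ range (max m (R + 1)), s i :=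
        sum_le_sum_of_subset_of_nonneg (range_subset_range.2 (le_max_left _ _))
          fun i _ _ => hs.1 i
    _ = 1 := by
        rw [sum_range_eq_of_eq_zero (n := R + 1) fun i hi _ => hs.2.1 i (by omega), hs.2.2]

theorem IsMixed.exists_last_ne_zero (hs : IsMixed R s) :
    ∃ L, s L ≠ 0 ∧ ∀ i, L < i → s i = 0 := by
  obtain ⟨m, hm, hsm⟩ := exists_ne_zero_of_sum_ne_zero (hs.2.2.trans_ne one_ne_zero)
  refine ⟨Nat.findGreatest (fun i => s i ≠ 0) R,
    Nat.findGreatest_spec (P := fun i => s i ≠ 0) (Nat.lt_succ_iff.1 (mem_range.1 hm)) hsm,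
    fun i hi => ?_⟩
  rcases le_or_gt i R with h | h
  · exact not_not.1 (Nat.findGreatest_is_greatest hi h)
  · exact hs.2.1 i h

theorem IsMixed.sum_mul_le (hs : IsMixed R s) {u : ℕ → ℝ} {c : ℝ}
    (hu : ∀ i ≤ R, u i ≤ c) :
    ∑ i ∈ range (R + 1), s i * u i ≤ c :=
  calc ∑ i ∈ range (R + 1), s i * u i
      ≤ ∑ i ∈ range (R + 1), s i * c :=
        sum_le_sum fun i hi =>
          mul_le_mul_of_nonneg_left (hu i (Nat.lt_succ_iff.1 (mem_range.1 hi))) (hs.1 i)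
    _ = c := by rw [← sum_mul, hs.2.2, one_mul]

theorem IsMixed.sum_mul_eq (hs : IsMixed R s) {u : ℕ → ℝ} {c : ℝ}
    (hu : ∀ i, s i ≠ 0 → u i = c) : ∑ i ∈ range (R + 1), s i * u i = c := by
  rw [sum_congr rfl fun i _ => show s i * u i = s i * c by
    by_cases h : s i = 0
    · rw [h, zero_mul, zero_mul]
    · rw [hu i h], ← sum_mul, hs.2.2, one_mul]

theorem IsMixed.eq_of_ne_zero (hs : IsMixed R s) {u : ℕ → ℝ}
    (hu : ∀ i ≤ R, u i ≤ ∑ j ∈ range (R + 1), s j * u j) {i : ℕ} (hi : s i ≠ 0) :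
    u i = ∑ j ∈ range (R + 1), s j * u j := by
  set W := ∑ j ∈ range (R + 1), s j * u j
  have hiR := hs.le_of_ne_zero hi
  have hzero : ∑ j ∈ range (R + 1), s j * (W - u j) = 0 := by
    simp only [mul_sub, sum_sub_distrib, ← sum_mul, hs.2.2, one_mul, W, sub_self]
  have hnonneg : ∀ j ∈ range (R + 1), 0 ≤ s j * (W - u j) := fun j hj =>
    mul_nonneg (hs.1 j) (sub_nonneg.2 (hu j (Nat.lt_succ_iff.1 (mem_range.1 hj))))
  have := (sum_eq_zero_iff_of_nonneg hnonneg).1 hzero i (mem_range.2 (Nat.lt_succ_of_le hiR))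
  rcases mul_eq_zero.1 this with h | h
  · exact absurd h hi
  · linarith

theorem isMixed_single {i : ℕ} (hi : i ≤ R) : IsMixed R (Pi.single i 1) := by
  refine ⟨fun j => ?_, fun j hj => Pi.single_eq_of_ne (by omega) _, ?_⟩
  · by_cases h : j = i
    · subst h; simp
    · simp [Pi.single_eq_of_ne h]
  · rw [sum_pi_single']
    simp [Nat.lt_succ_of_le hi]

theorem sum_single_mul {i : ℕ} (hi : i ≤ R) (u : ℕ → ℝ) :
    ∑ j ∈ range (R + 1), (Pi.single i 1 : ℕ → ℝ) j * u j = u i := by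
  rw [sum_eq_single_of_mem i (mem_range.2 (Nat.lt_succ_of_le hi)) fun j _ hj => by
    simp [Pi.single_eq_of_ne hj]]
  simp

end Mixed

/-- The expected share of the defender's endowment `R` that an attack of size `i` captures
against the defence `d`. -/
noncomputable def captured (R : ℕ) (d : ℕ → ℝ) (i : ℕ) : ℝ :=
  ∑ j ∈ range i, d j * ((R : ℝ) - j)

noncomputable def cumMass (a : ℕ → ℝ) (j : ℕ) : ℝ := ∑ i ∈ range (j + 1), a i

noncomputable def payAPure (RA RD : ℕ) (d : ℕ → ℝ) (i : ℕ) : ℝ :=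
  (RA : ℝ) - i + captured RD d i

noncomputable def payDPure (RD : ℕ) (a : ℕ → ℝ) (j : ℕ) : ℝ :=
  ((RD : ℝ) - j) * cumMass a j

theorem captured_succ (R : ℕ) (d : ℕ → ℝ) (i : ℕ) :
    captured R d (i + 1) = captured R d i + d i * ((R : ℝ) - i) :=
  sum_range_succ _ _

theorem captured_eq_of_eq_zero {R : ℕ} {d : ℕ → ℝ} {m n : ℕ}
    (hd : ∀ j, min m n ≤ j → j < max m n → d j = 0) : captured R d m = captured R d n :=
  sum_range_eq_of_eq_zero fun j hj hj' => by rw [hd j hj hj', zero_mul]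

theorem cumMass_succ (a : ℕ → ℝ) (j : ℕ) : cumMass a (j + 1) = cumMass a j + a (j + 1) :=
  sum_range_succ _ _

theorem eq_of_cumMass_eq {a b : ℕ → ℝ} (h : ∀ j, cumMass a j = cumMass b j) : a = b := by
  funext i
  cases i with
  | zero => simpa [cumMass] using h 0
  | succ i => linarith [h i, h (i + 1), cumMass_succ a i, cumMass_succ b i]

theorem sum_mul_piA {RA RD : ℕ} {d : ℕ → ℝ} (hd : IsMixed RD d) (i : ℕ) :
    ∑ j ∈ range (RD + 1), d j * piA RA RD i j = payAPure RA RD d i := by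
  have hpi : ∀ j, d j * piA RA RD i j
      = d j * ((RA : ℝ) - i) + if j < i then d j * ((RD : ℝ) - j) else 0 := fun j => by
    unfold piA; split_ifs <;> ring
  rw [sum_congr rfl fun j _ => hpi j, sum_add_distrib, ← sum_mul, hd.2.2, one_mul,
    sum_range_ite_lt fun j hj => by rw [hd.2.1 j hj, zero_mul]]
  rfl

theorem sum_mul_piD {RA RD : ℕ} {a : ℕ → ℝ} (ha : IsMixed RA a) (j : ℕ) :
    ∑ i ∈ range (RA + 1), a i * piD RD i j = payDPure RD a j := by
  have hpi : ∀ i, a i * piD RD i j = ((RD : ℝ) - j) * if i < j + 1 then a i else 0 :=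
    fun i => by unfold piD; split_ifs <;> first | (exfalso; omega) | ring
  rw [sum_congr rfl fun i _ => hpi i, ← mul_sum, sum_range_ite_lt ha.2.1]
  rfl

theorem PayA_eq_sum {RA RD : ℕ} (a : ℕ → ℝ) {d : ℕ → ℝ} (hd : IsMixed RD d) :
    PayA RA RD a d = ∑ i ∈ range (RA + 1), a i * payAPure RA RD d i := by
  simp only [PayA, mul_assoc, ← mul_sum, sum_mul_piA hd]

theorem PayD_eq_sum {RA RD : ℕ} {a : ℕ → ℝ} (ha : IsMixed RA a) (d : ℕ → ℝ) :
    PayD RA RD a d = ∑ j ∈ range (RD + 1), d j * payDPure RD a j := by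
  rw [PayD, sum_comm]
  simp only [mul_comm (a _) (d _), mul_assoc, ← mul_sum, sum_mul_piD ha]

theorem isNash_of_payPure_le {RA RD : ℕ} {a d : ℕ → ℝ}
    (ha : IsMixed RA a) (hd : IsMixed RD d)
    (hA : ∀ i ≤ RA, payAPure RA RD d i ≤ PayA RA RD a d)
    (hD : ∀ j ≤ RD, payDPure RD a j ≤ PayD RA RD a d) : IsNash RA RD a d :=
  ⟨ha, hd, fun a' ha' => (PayA_eq_sum a' hd).trans_le (ha'.sum_mul_le hA),
    fun d' hd' => (PayD_eq_sum ha d').trans_le (hd'.sum_mul_le hD)⟩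

theorem captured_succ_le {R : ℕ} {d : ℕ → ℝ} (hd : IsMixed R d) (hR : 1 ≤ R) (i : ℕ) :
    captured R d (i + 1) ≤ R - 1 + d 0 := by
  have hR' : (1 : ℝ) ≤ R := by exact_mod_cast hR
  have htail : ∑ j ∈ range i, d (j + 1) ≤ 1 - d 0 := by
    linarith [hd.sum_range_le_one (i + 1), sum_range_succ' d i]
  calc captured R d (i + 1)
      = ∑ j ∈ range i, d (j + 1) * ((R : ℝ) - (j + 1 : ℕ)) + d 0 * R := by
        simp [captured, sum_range_succ']
    _ ≤ ∑ j ∈ range i, d (j + 1) * ((R : ℝ) - 1) + d 0 * R := by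
        gcongr with j
        · exact hd.1 _
        · push_cast; linarith [(Nat.cast_nonneg j : (0 : ℝ) ≤ j)]
    _ ≤ (1 - d 0) * ((R : ℝ) - 1) + d 0 * R := by
        rw [← sum_mul]; gcongr
    _ = R - 1 + d 0 := by ring

noncomputable def harmonicTail (R m : ℕ) : ℝ := ∑ j ∈ range m, 1 / ((R : ℝ) - j)

theorem H_succ (n : ℕ) : H (n + 1) = H n + 1 / ((n : ℝ) + 1) := by
  rw [H, sum_Icc_succ_top (by omega), ← H]
  push_cast
  rfl

theorem harmonicTail_succ (R m : ℕ) :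
    harmonicTail R (m + 1) = harmonicTail R m + 1 / ((R : ℝ) - m) :=
  sum_range_succ _ _

theorem harmonicTail_eq_H_sub {R m : ℕ} (hm : m ≤ R) : harmonicTail R m = H R - H (R - m) := by
  induction m with
  | zero => simp [harmonicTail]
  | succ m ih =>
    obtain ⟨n, rfl⟩ := Nat.exists_eq_add_of_le hm
    rw [harmonicTail_succ, ih (by omega), show m + 1 + n - m = n + 1 by omega,
      show m + 1 + n - (m + 1) = n by omega, H_succ]
    push_cast
    ring

theorem harmonicTail_mono {R m n : ℕ} (hmn : m ≤ n) (hn : n ≤ R) :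
    harmonicTail R m ≤ harmonicTail R n :=
  sum_le_sum_of_subset_of_nonneg (range_subset_range.2 hmn) fun j hj _ =>
    (one_div_pos.2 (sub_pos.2 (Nat.cast_lt.2 (by simp at hj; omega)))).le

namespace IsUpperBound

variable {R k m : ℕ}

theorem lt (hk : IsUpperBound R k) : k < R := by
  have := hk.1; have := hk.2.1; omega

theorem harmonicTail_lt_one (hk : IsUpperBound R k) (hm : m ≤ k) : harmonicTail R m < 1 :=
  (harmonicTail_mono hm hk.lt.le).trans_lt
    ((harmonicTail_eq_H_sub hk.lt.le).trans_lt hk.2.2.1)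

theorem one_lt_harmonicTail (hk : IsUpperBound R k) (hm : k < m) (hmR : m ≤ R) :
    1 < harmonicTail R m := by
  have hk1 : 1 < harmonicTail R (k + 1) := by
    rw [harmonicTail_eq_H_sub (by omega), Nat.sub_add_eq]
    exact hk.2.2.2
  exact hk1.trans_le (harmonicTail_mono hm hmR)

end IsUpperBound

section Star

variable {R l : ℕ}

theorem dstar_of_lt {j : ℕ} (h : j < l) : dstar R l j = 1 / ((R : ℝ) - j) := if_pos h

theorem dstar_self : dstar R l l = 1 - harmonicTail R l := by simp [dstar, harmonicTail]

theorem dstar_of_gt {j : ℕ} (h : l < j) : dstar R l j = 0 := by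
  rw [dstar, if_neg (by omega), if_neg (by omega)]

theorem astar_of_gt {i : ℕ} (h : l < i) : astar R l i = 0 := by
  rw [astar, if_neg (by omega), if_neg (by omega)]

theorem captured_dstar (hl : l < R) {i : ℕ} (hi : i ≤ l) : captured R (dstar R l) i = i := by
  induction i with
  | zero => simp [captured]
  | succ i ih =>
    have hpos : (0 : ℝ) < R - i := sub_pos.2 (Nat.cast_lt.2 (by omega))
    rw [captured_succ, ih (by omega), dstar_of_lt (by omega)]
    field_simp
    push_cast
    ring

theorem captured_dstar_of_gt (hl : l < R) {i : ℕ} (hi : l < i) :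
    captured R (dstar R l) i = l + (1 - harmonicTail R l) * ((R : ℝ) - l) := by
  rw [captured_eq_of_eq_zero (n := l + 1) fun j hj _ => dstar_of_gt (by omega), captured_succ,
    captured_dstar hl le_rfl, dstar_self]

theorem cumMass_astar (hl : l < R) {j : ℕ} (hj : j ≤ l) :
    cumMass (astar R l) j = ((R : ℝ) - l) / ((R : ℝ) - j) := by
  induction j with
  | zero => simp [cumMass, astar]
  | succ j ih =>
    have hpos : (0 : ℝ) < R - (j + 1) := by
      rw [← Nat.cast_add_one]; exact sub_pos.2 (Nat.cast_lt.2 (by omega))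
    have hpos' : (0 : ℝ) < R - j := by linarith
    rw [cumMass_succ, ih (by omega), astar, if_neg (by omega), if_pos hj]
    push_cast
    rw [show (R : ℝ) - (j + 1) + 1 = R - j by ring]
    field_simp
    ring

theorem cumMass_astar_of_ge (hl : l < R) {j : ℕ} (hj : l ≤ j) : cumMass (astar R l) j = 1 := by
  have hpos : (0 : ℝ) < R - l := sub_pos.2 (Nat.cast_lt.2 hl)
  rw [cumMass, ← sum_range_eq_of_eq_zero (m := l + 1) fun i hi _ => astar_of_gt (by omega),
    ← cumMass, cumMass_astar hl le_rfl, div_self hpos.ne']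

theorem isMixed_astar (hl : l < R) {N : ℕ} (hN : l ≤ N) : IsMixed N (astar R l) := by
  refine ⟨fun i => ?_, fun i hi => astar_of_gt (by omega), cumMass_astar_of_ge hl hN⟩
  have hRl : (0 : ℝ) ≤ R - l := sub_nonneg.2 (Nat.cast_le.2 hl.le)
  unfold astar
  split_ifs with h0 hi
  · exact div_nonneg hRl (Nat.cast_nonneg R)
  · have hpos : (0 : ℝ) < R - i := sub_pos.2 (Nat.cast_lt.2 (by omega))
    positivity
  · exact le_rfl

theorem isMixed_dstar (hl : l < R) (hS : harmonicTail R l ≤ 1) {N : ℕ} (hN : l ≤ N) :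
    IsMixed N (dstar R l) := by
  refine ⟨fun j => ?_, fun j hj => dstar_of_gt (by omega), ?_⟩
  · unfold dstar
    split_ifs with h
    · exact (one_div_pos.2 (sub_pos.2 (Nat.cast_lt.2 (by omega)))).le
    · exact sub_nonneg.2 hS
    · exact le_rfl
  · rw [← sum_range_eq_of_eq_zero (m := l + 1) fun j hj _ => dstar_of_gt (by omega),
      sum_range_succ, dstar_self, sum_congr rfl fun j hj => dstar_of_lt (mem_range.1 hj),
      harmonicTail]
    ring

/-- `htop` says that the defender's mass on `l` is at most `1 / (RD - l)`, so that investing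
`l + 1`, when affordable, does not beat investing `l`. -/
theorem isNash_star {RA RD l : ℕ} (hlA : l ≤ RA) (hlD : l < RD) (hS : harmonicTail RD l ≤ 1)
    (htop : l < RA → 1 ≤ harmonicTail RD (l + 1)) :
    IsNash RA RD (astar RD l) (dstar RD l) := by
  have ha := isMixed_astar hlD hlA
  have hd := isMixed_dstar hlD hS hlD.le
  have hpayA : PayA RA RD (astar RD l) (dstar RD l) = RA := by
    rw [PayA_eq_sum _ hd]
    refine ha.sum_mul_eq fun i hi => ?_
    have hil : i ≤ l := not_lt.1 fun h => hi (astar_of_gt h)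
    rw [payAPure, captured_dstar hlD hil, sub_add_cancel]
  have hpayD : PayD RA RD (astar RD l) (dstar RD l) = RD - l := by
    rw [PayD_eq_sum ha]
    refine hd.sum_mul_eq fun j hj => ?_
    have hjl : j ≤ l := not_lt.1 fun h => hj (dstar_of_gt h)
    have hpos : (0 : ℝ) < RD - j := sub_pos.2 (Nat.cast_lt.2 (by omega))
    rw [payDPure, cumMass_astar hlD hjl]
    field_simp
  refine isNash_of_payPure_le ha hd (fun i hi => ?_) (fun j hj => ?_)
  · rw [hpayA, payAPure]
    rcases le_or_gt i l with hil | hil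
    · rw [captured_dstar hlD hil, sub_add_cancel]
    · have hpos : (0 : ℝ) < RD - l := sub_pos.2 (Nat.cast_lt.2 hlD)
      have hcap : (1 - harmonicTail RD l) * ((RD : ℝ) - l) ≤ 1 := by
        rw [← le_div_iff₀ hpos]
        linarith [htop (by omega), harmonicTail_succ RD l]
      have : (l : ℝ) + 1 ≤ i := by exact_mod_cast hil
      rw [captured_dstar_of_gt hlD hil]
      linarith
  · rw [hpayD, payDPure]
    rcases le_or_gt j l with hjl | hjl
    · have hpos : (0 : ℝ) < RD - j := sub_pos.2 (Nat.cast_lt.2 (by omega))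
      rw [cumMass_astar hlD hjl]
      field_simp
      rfl
    · have : (l : ℝ) ≤ j := by exact_mod_cast hjl.le
      rw [cumMass_astar_of_ge hlD hjl.le]
      linarith

end Star

namespace IsNash

variable {RA RD : ℕ} {a d : ℕ → ℝ}

theorem payAPure_le (hN : IsNash RA RD a d) {i : ℕ} (hi : i ≤ RA) :
    payAPure RA RD d i ≤ PayA RA RD a d := by
  simpa [PayA_eq_sum _ hN.2.1, sum_single_mul hi] using hN.2.2.1 _ (isMixed_single hi)

theorem payDPure_le (hN : IsNash RA RD a d) {j : ℕ} (hj : j ≤ RD) :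
    payDPure RD a j ≤ PayD RA RD a d := by
  simpa [PayD_eq_sum hN.1, sum_single_mul hj] using hN.2.2.2 _ (isMixed_single hj)

theorem payAPure_eq (hN : IsNash RA RD a d) {i : ℕ} (hi : a i ≠ 0) :
    payAPure RA RD d i = PayA RA RD a d := by
  have hW := PayA_eq_sum (RA := RA) a hN.2.1
  rw [hW]
  exact hN.1.eq_of_ne_zero (fun i hi => hW ▸ hN.payAPure_le hi) hi

theorem payDPure_eq (hN : IsNash RA RD a d) {j : ℕ} (hj : d j ≠ 0) :
    payDPure RD a j = PayD RA RD a d := by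
  have hV := PayD_eq_sum (RD := RD) hN.1 d
  rw [hV]
  exact hN.2.1.eq_of_ne_zero (fun j hj => hV ▸ hN.payDPure_le hj) hj

theorem le_payA (hN : IsNash RA RD a d) : (RA : ℝ) ≤ PayA RA RD a d := by
  simpa [payAPure, captured] using hN.payAPure_le (Nat.zero_le RA)

/-- Were the defender's value zero, the attacker would only invest amounts `≥ RD`, which pays
only if the defender concentrates on `0`; but then investing `1` is strictly better. -/
theorem payD_pos (hN : IsNash RA RD a d) (hD : 1 < RD) : 0 < PayD RA RD a d := by
  by_contra! hV0
  have ha : ∀ i < RD, a i = 0 := fun i hi => by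
    have hpos : (0 : ℝ) < RD - i := sub_pos.2 (Nat.cast_lt.2 hi)
    have hM : cumMass a i ≤ 0 :=
      nonpos_of_mul_nonpos_right ((hN.payDPure_le hi.le).trans hV0) hpos
    have hai : a i ≤ cumMass a i :=
      single_le_sum (fun j _ => hN.1.1 j) (mem_range.2 (Nat.lt_succ_self i))
    linarith [hN.1.1 i]
  obtain ⟨i, hi, -⟩ := hN.1.exists_last_ne_zero
  have hDi : RD ≤ i := not_lt.1 fun h => hi (ha i h)
  have hiA := hN.1.le_of_ne_zero hi
  obtain ⟨n, rfl⟩ : ∃ n, i = n + 1 := ⟨i - 1, by omega⟩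
  have hUi := hN.payAPure_eq hi
  have hU1 := hN.payAPure_le (i := 1) (by omega)
  have hcap := captured_succ_le hN.2.1 hD.le n
  have hd0 : d 0 ≤ 1 := by simpa using hN.2.1.sum_range_le_one 1
  have hDi' : (RD : ℝ) ≤ n + 1 := by exact_mod_cast hDi
  have hD' : (1 : ℝ) < RD := by exact_mod_cast hD
  simp only [payAPure, captured, sum_range_one, Nat.cast_zero, sub_zero, Nat.cast_one] at hU1
  rw [payAPure] at hUi
  push_cast at hUi
  nlinarith [hN.le_payA]

/-- A gap just below a point of the defender's support would make the attacker skip that point,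
which caps the defender's payoff there below her value. -/
theorem defence_ne_zero_of_succ (hN : IsNash RA RD a d) (hV0 : 0 < PayD RA RD a d) {j : ℕ}
    (h : d (j + 1) ≠ 0) : d j ≠ 0 := by
  intro hdj
  have hjD := hN.2.1.le_of_ne_zero h
  have ha : a (j + 1) = 0 := by
    by_contra ha
    have h1 := hN.payAPure_eq ha
    have h2 := hN.payAPure_le (i := j) (by have := hN.1.le_of_ne_zero ha; omega)
    rw [payAPure, captured_succ, hdj] at h1
    rw [payAPure] at h2
    push_cast at h1
    linarith
  have h1 := hN.payDPure_eq h
  have h2 := hN.payDPure_le (j := j) (by omega)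
  have hjD' : (j : ℝ) + 1 ≤ RD := by exact_mod_cast hjD
  rw [payDPure, cumMass_succ, ha, add_zero] at h1
  rw [payDPure] at h2
  push_cast at h1
  nlinarith

theorem defence_ne_zero_of_le (hN : IsNash RA RD a d) (hV0 : 0 < PayD RA RD a d) {j L : ℕ}
    (hL : d L ≠ 0) (hj : j ≤ L) : d j ≠ 0 := by
  obtain ⟨n, rfl⟩ := Nat.exists_eq_add_of_le hj
  induction n with
  | zero => exact hL
  | succ n ih => exact ih (hN.defence_ne_zero_of_succ hV0 hL) (by omega)

theorem lt_of_defence_ne_zero (hN : IsNash RA RD a d) (hV0 : 0 < PayD RA RD a d) {j : ℕ}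
    (h : d j ≠ 0) : j < RD := by
  refine lt_of_le_of_ne (hN.2.1.le_of_ne_zero h) fun hj => ?_
  have := hN.payDPure_eq h
  rw [payDPure, hj, sub_self, zero_mul] at this
  linarith

theorem payA_eq (hN : IsNash RA RD a d) (hV0 : 0 < PayD RA RD a d) : PayA RA RD a d = RA := by
  obtain ⟨L, hL, -⟩ := hN.2.1.exists_last_ne_zero
  have hV := hN.payDPure_eq (hN.defence_ne_zero_of_le hV0 hL (Nat.zero_le L))
  have ha0 : a 0 ≠ 0 := fun h => by
    simp [payDPure, cumMass, h] at hV
    linarith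
  rw [← hN.payAPure_eq ha0]
  simp [payAPure, captured]

theorem cumMass_eq (hN : IsNash RA RD a d) (hV0 : 0 < PayD RA RD a d) {j L : ℕ}
    (hL : d L ≠ 0) (hj : j ≤ L) : cumMass a j = PayD RA RD a d / ((RD : ℝ) - j) := by
  have hdj := hN.defence_ne_zero_of_le hV0 hL hj
  rw [eq_div_iff (sub_pos.2 (Nat.cast_lt.2 (hN.lt_of_defence_ne_zero hV0 hdj))).ne', mul_comm]
  exact hN.payDPure_eq hdj

theorem attack_ne_zero_of_le (hN : IsNash RA RD a d) (hV0 : 0 < PayD RA RD a d) {i L : ℕ}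
    (hL : d L ≠ 0) (hi : i ≤ L) : a i ≠ 0 := by
  have hLD := hN.lt_of_defence_ne_zero hV0 hL
  intro hai
  cases i with
  | zero =>
    have h := hN.cumMass_eq hV0 hL hi
    have hD : (0 : ℝ) < RD := Nat.cast_pos.2 (by omega)
    simp only [cumMass, zero_add, sum_range_one, hai, Nat.cast_zero, sub_zero] at h
    exact (div_pos hV0 hD).ne' h.symm
  | succ i =>
    have h := hN.cumMass_eq hV0 hL hi
    rw [cumMass_succ, hai, add_zero, hN.cumMass_eq hV0 hL (by omega)] at h
    have hpos : (0 : ℝ) < RD - (i + 1 : ℕ) := sub_pos.2 (Nat.cast_lt.2 (by omega))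
    have hlt : (RD : ℝ) - (i + 1 : ℕ) < RD - i := by push_cast; linarith
    exact (div_lt_div_of_pos_left hV0 hpos hlt).ne h

theorem captured_eq (hN : IsNash RA RD a d) (hV0 : 0 < PayD RA RD a d) {i L : ℕ}
    (hL : d L ≠ 0) (hi : i ≤ L) : captured RD d i = i := by
  have h := hN.payAPure_eq (hN.attack_ne_zero_of_le hV0 hL hi)
  rw [hN.payA_eq hV0, payAPure] at h
  linarith

theorem defence_eq_of_lt (hN : IsNash RA RD a d) (hV0 : 0 < PayD RA RD a d) {j L : ℕ}
    (hL : d L ≠ 0) (hj : j < L) : d j = 1 / ((RD : ℝ) - j) := by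
  have h := hN.captured_eq hV0 hL (i := j + 1) hj
  rw [captured_succ, hN.captured_eq hV0 hL hj.le] at h
  push_cast at h
  have hjD : j < RD := hj.trans (hN.lt_of_defence_ne_zero hV0 hL)
  rw [eq_div_iff (sub_pos.2 (Nat.cast_lt.2 hjD)).ne']
  linarith

theorem defence_top_eq (hN : IsNash RA RD a d) (hV0 : 0 < PayD RA RD a d) {L : ℕ}
    (hL : d L ≠ 0) (hLtop : ∀ j, L < j → d j = 0) : d L = 1 - harmonicTail RD L := by
  have h := hN.2.1.sum_range_eq_one hLtop
  rw [sum_range_succ, sum_congr rfl fun j hj => hN.defence_eq_of_lt hV0 hL (mem_range.1 hj),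
    ← harmonicTail] at h
  linarith

theorem captured_of_gt (hN : IsNash RA RD a d) (hV0 : 0 < PayD RA RD a d) {i L : ℕ}
    (hL : d L ≠ 0) (hLtop : ∀ j, L < j → d j = 0) (hi : L < i) :
    captured RD d i = L + d L * ((RD : ℝ) - L) := by
  rw [captured_eq_of_eq_zero (n := L + 1) fun j hj _ => hLtop j (by omega), captured_succ,
    hN.captured_eq hV0 hL le_rfl]

theorem one_le_harmonicTail_succ (hN : IsNash RA RD a d) (hV0 : 0 < PayD RA RD a d) {L : ℕ}
    (hL : d L ≠ 0) (hLtop : ∀ j, L < j → d j = 0) (hLA : L < RA) :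
    1 ≤ harmonicTail RD (L + 1) := by
  have h := hN.payAPure_le hLA
  rw [payAPure, hN.payA_eq hV0, hN.captured_of_gt hV0 hL hLtop (Nat.lt_succ_self L)] at h
  have hpos : (0 : ℝ) < RD - L := sub_pos.2 (Nat.cast_lt.2 (hN.lt_of_defence_ne_zero hV0 hL))
  have hdL : d L ≤ 1 / ((RD : ℝ) - L) := by
    rw [le_div_iff₀ hpos]; push_cast at h; linarith
  rw [harmonicTail_succ]
  linarith [hN.defence_top_eq hV0 hL hLtop]

theorem attack_eq_zero_of_gt (hN : IsNash RA RD a d) (hV0 : 0 < PayD RA RD a d) {L : ℕ}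
    (hL : d L ≠ 0) (hLtop : ∀ j, L < j → d j = 0) (hS : harmonicTail RD (L + 1) ≠ 1)
    {i : ℕ} (hi : L < i) : a i = 0 := by
  by_contra hai
  have hLA : L < RA := hi.trans_le (hN.1.le_of_ne_zero hai)
  have h := hN.payAPure_eq hai
  rw [payAPure, hN.payA_eq hV0, hN.captured_of_gt hV0 hL hLtop hi] at h
  have hLi : (L : ℝ) + 1 ≤ i := by exact_mod_cast hi
  have hpos : (0 : ℝ) < RD - L := sub_pos.2 (Nat.cast_lt.2 (hN.lt_of_defence_ne_zero hV0 hL))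
  have hdL : 1 / ((RD : ℝ) - L) ≤ d L := by
    rw [div_le_iff₀ hpos]; linarith
  have hup := hN.one_le_harmonicTail_succ hV0 hL hLtop hLA
  rw [harmonicTail_succ] at hS hup
  exact hS (by linarith [hN.defence_top_eq hV0 hL hLtop])

theorem eq_star_of_top (hN : IsNash RA RD a d) (hV0 : 0 < PayD RA RD a d) {L : ℕ}
    (hL : d L ≠ 0) (hLtop : ∀ j, L < j → d j = 0) (haTop : ∀ i, L < i → a i = 0) :
    a = astar RD L ∧ d = dstar RD L := by
  have hLD := hN.lt_of_defence_ne_zero hV0 hL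
  have hV0eq : PayD RA RD a d = RD - L := by
    have h := hN.payDPure_eq hL
    rwa [payDPure, cumMass, hN.1.sum_range_eq_one haTop, mul_one, eq_comm] at h
  constructor
  · refine eq_of_cumMass_eq fun j => ?_
    rcases le_or_gt j L with hj | hj
    · rw [hN.cumMass_eq hV0 hL hj, cumMass_astar hLD hj, hV0eq]
    · rw [cumMass_astar_of_ge hLD hj.le, cumMass,
        hN.1.sum_range_eq_one fun i hi => haTop i (by omega)]
  · funext j
    rcases lt_trichotomy j L with hj | rfl | hj
    · rw [hN.defence_eq_of_lt hV0 hL hj, dstar_of_lt hj]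
    · rw [hN.defence_top_eq hV0 hL hLtop, dstar_self]
    · rw [hLtop j hj, dstar_of_gt hj]

theorem eq_star (hN : IsNash RA RD a d) {k : ℕ} (hk : IsUpperBound RD k) :
    a = astar RD (min RA k) ∧ d = dstar RD (min RA k) := by
  have hV0 := hN.payD_pos (hk.1.trans_lt hk.lt)
  obtain ⟨L, hL, hLtop⟩ := hN.2.1.exists_last_ne_zero
  have hLD := hN.lt_of_defence_ne_zero hV0 hL
  have hLk : L ≤ k := by
    refine not_lt.1 fun hkL => hL (le_antisymm ?_ (hN.2.1.1 L))
    linarith [hN.defence_top_eq hV0 hL hLtop, hk.one_lt_harmonicTail hkL hLD.le]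
  have hS : harmonicTail RD (L + 1) ≠ 1 := by
    rcases hLk.lt_or_eq with h | rfl
    · exact (hk.harmonicTail_lt_one h).ne
    · exact (hk.one_lt_harmonicTail (Nat.lt_succ_self L) hLD).ne'
  have hLA := hN.1.le_of_ne_zero (hN.attack_ne_zero_of_le hV0 hL le_rfl)
  have hLmin : L = min RA k := by
    refine le_antisymm (le_min hLA hLk) (not_lt.1 fun hlt => ?_)
    exact (hk.harmonicTail_lt_one (by omega)).not_ge
      (hN.one_le_harmonicTail_succ hV0 hL hLtop (by omega))
  rw [← hLmin]
  exact hN.eq_star_of_top hV0 hL hLtop fun i hi => hN.attack_eq_zero_of_gt hV0 hL hLtop hS hi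

end IsNash

theorem unequal_endowments_unique_equilibrium_general (RA RD k : ℕ)
    (hk : IsUpperBound RD k) :
    IsNash RA RD (astar RD (min RA k)) (dstar RD (min RA k)) ∧
    ∀ a d : ℕ → ℝ, IsNash RA RD a d → a = astar RD (min RA k) ∧ d = dstar RD (min RA k) := by
  have hkR := hk.lt
  refine ⟨isNash_star (min_le_left _ _) (by omega) (hk.harmonicTail_lt_one (min_le_right _ _)).le
    fun h => (hk.one_lt_harmonicTail (by omega) (by omega)).le, fun a d hN => hN.eq_star hk⟩

/-- The A-D game with endowments `R_A, R_D` has exactly one mixed-strategy Nash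
equilibrium, namely `(astar R_D l*, dstar R_D l*)` with `l* = min (R_A, k*)`. -/
theorem unequal_endowments_unique_equilibrium (RA RD k : ℕ) (hA : 2 ≤ RA) (hD : 2 ≤ RD)
    (hk : IsUpperBound RD k) :
    IsNash RA RD (astar RD (min RA k)) (dstar RD (min RA k)) ∧
    ∀ a d : ℕ → ℝ, IsNash RA RD a d → a = astar RD (min RA k) ∧ d = dstar RD (min RA k) :=
  unequal_endowments_unique_equilibrium_general RA RD k hk
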